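/- For each integer n ≥ 1 set σₙ = 1/(4n), aₙ = σₙ/√(1 − 2σₙ²) and uₙ(θ) = (aₙ cos(nθ), aₙ sin(nθ), √(1 − aₙ²)). Then the energies Eₙ = ∫₀^{2π} (1 + σₙ² κₙ(θ)²) ‖uₙ'(θ)‖ dθ, where κₙ(θ) = ‖uₙ''(θ) − ⟨uₙ''(θ), uₙ(θ)⟩ uₙ(θ)‖ / ‖uₙ'(θ)‖² is the geodesic curvature, converge to π as n → ∞. -/

import Mathlib

/-!
`uₙ` is the latitude circle at height `bₙ = √(1 - aₙ²)` traversed `n` times, with constant speed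
`aₙ n = 1 / (4 √(1 - 2σₙ²))` and constant geodesic curvature `bₙ / aₙ`. The choice of `aₙ` makes
`1 + σₙ² κₙ² = 2 - 3σₙ²`, so `Eₙ = π (2 - 3σₙ²) / (2 √(1 - 2σₙ²))`, which tends to `π` as `σₙ → 0`.
-/

open Real Filter

noncomputable section

section Curves

variable {E : Type*} [NormedAddCommGroup E] [InnerProductSpace ℝ E]

def geodesicCurvature (u : ℝ → E) (θ : ℝ) : ℝ :=
  ‖deriv (deriv u) θ - (inner ℝ (deriv (deriv u) θ) (u θ) : ℝ) • u θ‖ / ‖deriv u θ‖ ^ 2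

def regularizedEnergy (σ : ℝ) (u : ℝ → E) : ℝ :=
  ∫ θ in (0 : ℝ)..(2 * π), (1 + σ ^ 2 * geodesicCurvature u θ ^ 2) * ‖deriv u θ‖

end Curves

section Vec3

lemma hasDerivAt_vec3 {f g h : ℝ → ℝ} {f' g' h' x : ℝ}
    (hf : HasDerivAt f f' x) (hg : HasDerivAt g g' x) (hh : HasDerivAt h h' x) :
    HasDerivAt (fun t => !₂[f t, g t, h t]) !₂[f', g', h'] x := by
  have H : HasDerivAt (fun t => ![f t, g t, h t]) ![f', g', h'] x := by
    rw [hasDerivAt_pi]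
    intro i
    fin_cases i <;> simpa
  exact (PiLp.hasFDerivAt_toLp 2 _).comp_hasDerivAt x H

lemma norm_vec3 (x y z : ℝ) : ‖!₂[x, y, z]‖ = √(x ^ 2 + y ^ 2 + z ^ 2) := by
  simp [EuclideanSpace.norm_eq, Fin.sum_univ_three]

lemma inner_vec3 (x y z x' y' z' : ℝ) :
    inner ℝ !₂[x, y, z] !₂[x', y', z'] = x * x' + y * y' + z * z' := by
  simp only [PiLp.inner_apply, RCLike.inner_apply, conj_trivial, Fin.sum_univ_three,
    Matrix.cons_val_zero, Matrix.cons_val_one, Matrix.cons_val]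
  ring

lemma vec3_sub_smul (x y z x' y' z' r : ℝ) :
    !₂[x, y, z] - r • !₂[x', y', z'] = !₂[x - r * x', y - r * y', z - r * z'] := by
  ext i; fin_cases i <;> simp

lemma smul_vec3 (r x y z : ℝ) : r • !₂[x, y, z] = !₂[r * x, r * y, r * z] := by
  ext i; fin_cases i <;> simp

end Vec3

def latitudeCircle (a b ν θ : ℝ) : EuclideanSpace ℝ (Fin 3) :=
  !₂[a * cos (ν * θ), a * sin (ν * θ), b]

section LatitudeCircle

variable (a b ν : ℝ)

lemma deriv_latitudeCircle :
    deriv (latitudeCircle a b ν) = fun θ => !₂[-(a * ν * sin (ν * θ)), a * ν * cos (ν * θ), 0] := by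
  ext1 θ
  have hν := (hasDerivAt_id θ).const_mul ν
  simp only [mul_one, id] at hν
  refine HasDerivAt.deriv (hasDerivAt_vec3 ?_ ?_ (hasDerivAt_const θ b))
  · exact (hν.cos.const_mul a).congr_deriv (by ring)
  · exact (hν.sin.const_mul a).congr_deriv (by ring)

lemma deriv_deriv_latitudeCircle :
    deriv (deriv (latitudeCircle a b ν)) =
      fun θ => !₂[-(a * ν ^ 2 * cos (ν * θ)), -(a * ν ^ 2 * sin (ν * θ)), 0] := by
  ext1 θ
  have hν := (hasDerivAt_id θ).const_mul ν
  simp only [mul_one, id] at hν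
  rw [deriv_latitudeCircle]
  refine HasDerivAt.deriv (hasDerivAt_vec3 ?_ ?_ (hasDerivAt_const θ 0))
  · exact (hν.sin.const_mul (a * ν)).neg.congr_deriv (by ring)
  · exact (hν.cos.const_mul (a * ν)).congr_deriv (by ring)

lemma norm_deriv_latitudeCircle (θ : ℝ) : ‖deriv (latitudeCircle a b ν) θ‖ = |a * ν| := by
  rw [deriv_latitudeCircle, norm_vec3, ← sqrt_sq_eq_abs]
  congr 1
  linear_combination (a * ν) ^ 2 * sin_sq_add_cos_sq (ν * θ)

variable {a b}

lemma normal_deriv_deriv_latitudeCircle (hab : a ^ 2 + b ^ 2 = 1) (θ : ℝ) :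
    deriv (deriv (latitudeCircle a b ν)) θ
        - inner ℝ (deriv (deriv (latitudeCircle a b ν)) θ) (latitudeCircle a b ν θ)
          • latitudeCircle a b ν θ
      = (a * ν ^ 2 * b) • !₂[-(b * cos (ν * θ)), -(b * sin (ν * θ)), a] := by
  have hsc := sin_sq_add_cos_sq (ν * θ)
  rw [deriv_deriv_latitudeCircle, latitudeCircle, inner_vec3]
  have hinner : -(a * ν ^ 2 * cos (ν * θ)) * (a * cos (ν * θ))
      + -(a * ν ^ 2 * sin (ν * θ)) * (a * sin (ν * θ)) + 0 * b = -(a * ν) ^ 2 := by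
    linear_combination (-(a * ν) ^ 2) * hsc
  rw [hinner, vec3_sub_smul, smul_vec3]
  refine congrArg (WithLp.toLp 2) (Matrix.vec3_eq ?_ ?_ ?_)
  · linear_combination (a * ν ^ 2 * cos (ν * θ)) * hab
  · linear_combination (a * ν ^ 2 * sin (ν * θ)) * hab
  · ring

lemma geodesicCurvature_latitudeCircle (hab : a ^ 2 + b ^ 2 = 1) (hν : ν ≠ 0) (θ : ℝ) :
    geodesicCurvature (latitudeCircle a b ν) θ = |b| / |a| := by
  have hunit : ‖!₂[-(b * cos (ν * θ)), -(b * sin (ν * θ)), a]‖ = 1 := by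
    rw [norm_vec3, sqrt_eq_one]
    linear_combination b ^ 2 * cos_sq_add_sin_sq (ν * θ) + hab
  rw [geodesicCurvature, normal_deriv_deriv_latitudeCircle ν hab, norm_smul, hunit,
    norm_deriv_latitudeCircle, Real.norm_eq_abs, mul_one, sq_abs, abs_mul, abs_mul,
    abs_of_nonneg (sq_nonneg ν)]
  rcases eq_or_ne a 0 with rfl | ha
  · simp
  · field_simp
    rw [sq_abs, mul_comm]

lemma regularizedEnergy_latitudeCircle (σ : ℝ) (hab : a ^ 2 + b ^ 2 = 1) (hν : ν ≠ 0) :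
    regularizedEnergy σ (latitudeCircle a b ν) = 2 * π * ((1 + σ ^ 2 * (b / a) ^ 2) * |a * ν|) := by
  simp only [regularizedEnergy, geodesicCurvature_latitudeCircle ν hab hν,
    norm_deriv_latitudeCircle, div_pow, sq_abs, intervalIntegral.integral_const, smul_eq_mul,
    sub_zero]

end LatitudeCircle

lemma regularizedEnergy_tunedLatitudeCircle {σ ν : ℝ} (hσ : 0 < σ) (hσ3 : 3 * σ ^ 2 < 1)
    (hν : 4 * σ * ν = 1) :
    regularizedEnergy σ
        (latitudeCircle (σ / √(1 - 2 * σ ^ 2)) (√(1 - (σ / √(1 - 2 * σ ^ 2)) ^ 2)) ν)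
      = π * (2 - 3 * σ ^ 2) / (2 * √(1 - 2 * σ ^ 2)) := by
  set r := √(1 - 2 * σ ^ 2)
  have hr2 : r ^ 2 = 1 - 2 * σ ^ 2 := sq_sqrt (by nlinarith)
  have hr : 0 < r := sqrt_pos.2 (by nlinarith)
  have ha2 : (σ / r) ^ 2 < 1 := by
    rw [div_pow, hr2, div_lt_one (by nlinarith)]; nlinarith
  have hb2 : √(1 - (σ / r) ^ 2) ^ 2 = 1 - (σ / r) ^ 2 := sq_sqrt (by linarith)
  have hν0 : ν ≠ 0 := by rintro rfl; simp at hν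
  have hspeed : σ / r * ν = 1 / (4 * r) := by
    field_simp
    linarith
  have hbending : 1 + σ ^ 2 * ((1 - (σ / r) ^ 2) / (σ / r) ^ 2) = 2 - 3 * σ ^ 2 := by
    field_simp
    linear_combination hr2
  rw [regularizedEnergy_latitudeCircle ν σ (by linarith) hν0, div_pow, hb2, hbending, hspeed,
    abs_of_pos (by positivity)]
  ring

end

/-- For `σₙ = 1/(4n)`, `aₙ = σₙ/√(1 − 2σₙ²)` and
`uₙ(θ) = (aₙ cos(nθ), aₙ sin(nθ), √(1 − aₙ²))`, the regularized energies
`Eₙ = ∫₀^{2π} (1 + σₙ² κₙ(θ)²) ‖uₙ'(θ)‖ dθ` converge to `π`, where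
`κₙ(θ) = ‖uₙ''(θ) − ⟨uₙ''(θ), uₙ(θ)⟩ uₙ(θ)‖ / ‖uₙ'(θ)‖²` is the geodesic
curvature. -/
theorem energies_tendsto_pi
    (σ a : ℕ → ℝ) (u : ℕ → ℝ → EuclideanSpace ℝ (Fin 3)) (κ : ℕ → ℝ → ℝ)
    (hσ : ∀ n, σ n = 1 / (4 * n))
    (ha : ∀ n, a n = σ n / Real.sqrt (1 - 2 * σ n ^ 2))
    (hu : ∀ n, u n = fun θ => WithLp.toLp 2 ![a n * Real.cos (n * θ), a n * Real.sin (n * θ),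
      Real.sqrt (1 - a n ^ 2)])
    (hκ : ∀ n θ, κ n θ =
      ‖deriv (deriv (u n)) θ
          - (inner ℝ (deriv (deriv (u n)) θ) (u n θ) : ℝ) • u n θ‖
        / ‖deriv (u n) θ‖ ^ 2) :
    Tendsto
      (fun n : ℕ =>
        ∫ θ in (0 : ℝ)..(2 * π), (1 + σ n ^ 2 * κ n θ ^ 2) * ‖deriv (u n) θ‖)
      atTop (nhds π) := by
  have hσ_tendsto : Tendsto σ atTop (nhds 0) := by
    rw [show σ = fun n : ℕ => (4 * (n : ℝ))⁻¹ from funext fun n => by rw [hσ n, one_div]]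
    exact (tendsto_natCast_atTop_atTop.const_mul_atTop four_pos).inv_tendsto_atTop
  have hlimit : Tendsto (fun s : ℝ => π * (2 - 3 * s ^ 2) / (2 * √(1 - 2 * s ^ 2)))
      (nhds 0) (nhds π) := by
    have hcont : ContinuousAt (fun s : ℝ => π * (2 - 3 * s ^ 2) / (2 * √(1 - 2 * s ^ 2))) 0 :=
      ContinuousAt.div (by fun_prop) (by fun_prop) (by norm_num)
    simpa using hcont.tendsto
  refine (hlimit.comp hσ_tendsto).congr' ?_
  filter_upwards [eventually_ge_atTop 1] with n hn
  have hn : (1 : ℝ) ≤ n := by exact_mod_cast hn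
  have hσn : 0 < σ n := by rw [hσ n]; positivity
  have hσn3 : 3 * σ n ^ 2 < 1 := by
    rw [hσ n, div_pow, mul_div_assoc', div_lt_one (by positivity)]; nlinarith
  have hun : u n = latitudeCircle (a n) (√(1 - a n ^ 2)) n := hu n
  have hE : (∫ θ in (0 : ℝ)..(2 * π), (1 + σ n ^ 2 * κ n θ ^ 2) * ‖deriv (u n) θ‖)
      = regularizedEnergy (σ n) (u n) := by
    simp only [hκ, regularizedEnergy, geodesicCurvature]
  rw [Function.comp_apply, hE, hun, ha n,
    regularizedEnergy_tunedLatitudeCircle hσn hσn3 (by rw [hσ n]; field_simp)]
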